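/- Let n = 2r be even and let ξ, η be subspaces of 𝔽₂ⁿ with ξ ⊆ η^⊥ (orthogonality with respect to the standard bilinear form ⟨u,v⟩ = Σᵢ uᵢvᵢ), and set k = n − dim ξ − dim η. Let α be a subspace of 𝔽₂ⁿ with α = α^⊥. Then [dim((η^⊥ ∩ α) + ξ) − dim ξ] + [dim((ξ^⊥ ∩ α) + η) − dim η] = k. (In particular, any self-orthogonal subspace α contains representatives of k independent logical operators of any CSS code of length n and dimension k.) -/

import Mathlib

open Module

/-- The standard bilinear form `⟨u,v⟩ = ∑ i, uᵢ vᵢ` on `𝔽₂ⁿ`. -/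
def stdBilinForm (n : ℕ) : LinearMap.BilinForm (ZMod 2) (Fin n → ZMod 2) :=
  LinearMap.mk₂ (ZMod 2) (fun u v => ∑ i, u i * v i)
    (fun u u' v => by simp [add_mul, Finset.sum_add_distrib])
    (fun c u v => by simp [Finset.mul_sum, mul_assoc])
    (fun u v v' => by simp [mul_add, Finset.sum_add_distrib])
    (fun c u v => by simp [Finset.mul_sum, mul_left_comm])

/-! Since `α^⊥ = α`, the space `((η^⊥ ∩ α) + ξ)^⊥ = (η + α) ∩ ξ^⊥` equals `(ξ^⊥ ∩ α) + η` by
the modular law (`η ⊆ ξ^⊥`). The two spaces are therefore orthogonal complements of each other,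
so their dimensions add up to `n`, which is the claim. -/

namespace LinearMap.BilinForm

section CommSemiring

variable {R M : Type*} [CommSemiring R] [AddCommMonoid M] [Module R M]

theorem orthogonal_sup (B : LinearMap.BilinForm R M) (N L : Submodule R M) :
    B.orthogonal (N ⊔ L) = B.orthogonal N ⊓ B.orthogonal L := by
  refine le_antisymm (le_inf (orthogonal_le le_sup_left) (orthogonal_le le_sup_right)) ?_
  rintro x ⟨hxN, hxL⟩ v hv
  obtain ⟨y, hy, z, hz, rfl⟩ := Submodule.mem_sup.mp hv
  have hy : B y x = 0 := hxN y hy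
  have hz : B z x = 0 := hxL z hz
  change B (y + z) x = 0
  rw [map_add, LinearMap.add_apply, hy, hz, add_zero]

end CommSemiring

variable {K V : Type*} [Field K] [AddCommGroup V] [Module K V] [FiniteDimensional K V]
  {B : LinearMap.BilinForm K V}

theorem finrank_add_finrank_orthogonal_of_nondegenerate (hB : B.Nondegenerate)
    (W : Submodule K V) : finrank K W + finrank K (B.orthogonal W) = finrank K V := by
  rw [finrank_orthogonal hB]
  have := Submodule.finrank_le W
  lia

theorem orthogonal_orthogonal_inf_sup (hB : B.Nondegenerate) (hB₀ : B.IsRefl)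
    {α ξ η : Submodule K V} (hξη : ξ ≤ B.orthogonal η) (hα : B.orthogonal α = α) :
    B.orthogonal ((B.orthogonal η ⊓ α) ⊔ ξ) = (B.orthogonal ξ ⊓ α) ⊔ η := by
  have hηξ : η ≤ B.orthogonal ξ := (le_orthogonal_orthogonal hB₀).trans (orthogonal_le hξη)
  calc B.orthogonal ((B.orthogonal η ⊓ α) ⊔ ξ)
      = B.orthogonal (B.orthogonal (η ⊔ α)) ⊓ B.orthogonal ξ := by
        rw [orthogonal_sup, orthogonal_sup B η α, hα]
    _ = B.orthogonal ξ ⊓ (α ⊔ η) := by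
        rw [orthogonal_orthogonal hB hB₀, inf_comm, sup_comm]
    _ = (B.orthogonal ξ ⊓ α) ⊔ η := (inf_sup_assoc_of_le _ hηξ).symm

end LinearMap.BilinForm

lemma stdBilinForm_apply {n : ℕ} (u v : Fin n → ZMod 2) :
    stdBilinForm n u v = ∑ i, u i * v i := rfl

lemma stdBilinForm_isRefl (n : ℕ) : (stdBilinForm n).IsRefl := fun u v h => by
  simpa only [stdBilinForm_apply, mul_comm] using h

lemma stdBilinForm_nondegenerate (n : ℕ) : (stdBilinForm n).Nondegenerate := by
  refine (LinearMap.IsRefl.nondegenerate_iff_separatingLeft (stdBilinForm_isRefl n)).mpr ?_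
  intro u hu
  funext i
  simpa [stdBilinForm_apply, Pi.single_apply] using hu (Pi.single i 1)

theorem logical_operators_in_self_orthogonal_general {n : ℕ}
    (ξ η : Submodule (ZMod 2) (Fin n → ZMod 2))
    (hξη : ξ ≤ (stdBilinForm n).orthogonal η)
    (k : ℤ)
    (hk : k = (n : ℤ) - finrank (ZMod 2) ξ - finrank (ZMod 2) η)
    (α : Submodule (ZMod 2) (Fin n → ZMod 2))
    (hα : α = (stdBilinForm n).orthogonal α) :
    ((finrank (ZMod 2) (((stdBilinForm n).orthogonal η ⊓ α) ⊔ ξ :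
          Submodule (ZMod 2) (Fin n → ZMod 2)) : ℤ) - finrank (ZMod 2) ξ)
        + ((finrank (ZMod 2) (((stdBilinForm n).orthogonal ξ ⊓ α) ⊔ η :
              Submodule (ZMod 2) (Fin n → ZMod 2)) : ℤ) - finrank (ZMod 2) η)
      = k := by
  have hdim := LinearMap.BilinForm.finrank_add_finrank_orthogonal_of_nondegenerate
    (stdBilinForm_nondegenerate n) (((stdBilinForm n).orthogonal η ⊓ α) ⊔ ξ)
  rw [LinearMap.BilinForm.orthogonal_orthogonal_inf_sup (stdBilinForm_nondegenerate n)
    (stdBilinForm_isRefl n) hξη hα.symm, finrank_fin_fun] at hdim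
  lia

/-- Let `n = 2r`, let `ξ, η ⊆ 𝔽₂ⁿ` with `ξ ⊆ η^⊥` (standard bilinear
form), `k = n − dim ξ − dim η`, and let `α` be a self-orthogonal subspace `α = α^⊥`. Then
`[dim((η^⊥ ∩ α) + ξ) − dim ξ] + [dim((ξ^⊥ ∩ α) + η) − dim η] = k`. -/
theorem logical_operators_in_self_orthogonal {n r : ℕ} (hn : n = 2 * r)
    (ξ η : Submodule (ZMod 2) (Fin n → ZMod 2))
    (hξη : ξ ≤ (stdBilinForm n).orthogonal η)
    (k : ℤ)
    (hk : k = (n : ℤ) - finrank (ZMod 2) ξ - finrank (ZMod 2) η)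
    (α : Submodule (ZMod 2) (Fin n → ZMod 2))
    (hα : α = (stdBilinForm n).orthogonal α) :
    ((finrank (ZMod 2) (((stdBilinForm n).orthogonal η ⊓ α) ⊔ ξ :
          Submodule (ZMod 2) (Fin n → ZMod 2)) : ℤ) - finrank (ZMod 2) ξ)
        + ((finrank (ZMod 2) (((stdBilinForm n).orthogonal ξ ⊓ α) ⊔ η :
              Submodule (ZMod 2) (Fin n → ZMod 2)) : ℤ) - finrank (ZMod 2) η)
      = k :=
  logical_operators_in_self_orthogonal_general ξ η hξη k hk α hα
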